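/- arXiv:0903.1453 — 4 statements merged into one kernel-verified Lean document; each statement's English description precedes it below -/
import Mathlib

section
/- There is a bijection between pairs of words w_0 ⪯ w_1 in W(n-k, k) (words of length n with k plus signs) and monotone increasing functions f : {1,...,n+1} → {1,...,n+1} satisfying f(i) ≤ i for all i and taking exactly k+1 distinct values. -/
/-- Positions (0-indexed, left to right) of the minus signs (`false`) in a word. -/
def minusPos (w : List Bool) : List ℕ :=
  (List.range w.length).filter (fun i => w.getD i true = false)

/-- `w ∈ W(n₋, n₊)`: the word has `n₋` minus signs and `n₊` plus signs. -/
def memW (nm np : ℕ) (w : List Bool) : Prop :=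
  w.count false = nm ∧ w.count true = np

/-- The partial order `⪯`: the i'th minus sign of `w₀` occurs at a position
less than or equal to the position of the i'th minus sign of `w₁`. -/
def wle (w₀ w₁ : List Bool) : Prop :=
  ∀ i, (minusPos w₀).getD i 0 ≤ (minusPos w₁).getD i 0

/-!
A monotone `f` with `f 0 = 0` is recorded by two words: the jump word, with a plus at `i` when
`f i < f (i + 1)`, and the image word, with a plus at `i` when `i + 1` is a value of `f`. If `P₀`
and `P₁` count the plus signs in their prefixes, then `f t ≤ s ↔ P₀ t ≤ P₁ s`, because both sides
compare the nonzero values of `f` up to `f t` with those up to `s`. So `f` is the lower adjoint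
`t ↦ min {s | P₀ t ≤ P₁ s}`, which makes the encoding injective, and conversely this lower adjoint
realises every pair of words with equally many plus signs. Under the correspondence `f t ≤ t`
becomes `P₀ ≤ P₁`, i.e. `w₀ ⪯ w₁` read on plus signs, and `f` takes one more value than there are
plus signs.
-/

theorem Nat.exists_eq_of_le_of_le_add_one {g : ℕ → ℕ} (h0 : g 0 = 0)
    (hg : ∀ t, g (t + 1) ≤ g t + 1) {c T : ℕ} (hc : c ≤ g T) : ∃ t ≤ T, g t = c := by
  induction T with
  | zero => exact ⟨0, le_rfl, by omega⟩
  | succ T ih =>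
    by_cases h : c ≤ g T
    · obtain ⟨t, htT, ht⟩ := ih h
      exact ⟨t, by omega, ht⟩
    · exact ⟨T + 1, le_rfl, by have := hg T; omega⟩

def plusCount (w : List Bool) (t : ℕ) : ℕ := (w.take t).count true

section plusCount

variable (w : List Bool)

@[simp] lemma plusCount_zero : plusCount w 0 = 0 := by simp [plusCount]

lemma plusCount_add_one (t : ℕ) :
    plusCount w (t + 1) = plusCount w t + (w.getD t false).toNat := by
  rw [plusCount, plusCount, List.take_add_one, List.count_append, List.getD_eq_getElem?_getD]
  cases w[t]? with
  | none => rfl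
  | some b => cases b <;> rfl

lemma plusCount_add_one_le (t : ℕ) : plusCount w (t + 1) ≤ plusCount w t + 1 := by
  rw [plusCount_add_one]
  exact Nat.add_le_add_left (Bool.toNat_le _) _

lemma monotone_plusCount : Monotone (plusCount w) :=
  monotone_nat_of_le_succ fun t => by simp [plusCount_add_one]

lemma plusCount_le_count (t : ℕ) : plusCount w t ≤ w.count true :=
  (List.take_sublist t w).count_le true

lemma plusCount_of_length_le {t : ℕ} (ht : w.length ≤ t) : plusCount w t = w.count true := by
  rw [plusCount, List.take_of_length_le ht]

lemma plusCount_min_length (t : ℕ) : plusCount w (min t w.length) = plusCount w t := by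
  rcases le_total t w.length with h | h
  · rw [min_eq_left h]
  · rw [min_eq_right h, plusCount_of_length_le w h, plusCount_of_length_le w le_rfl]

lemma exists_plusCount_eq {c : ℕ} (hc : c ≤ w.count true) :
    ∃ t ≤ w.length, plusCount w t = c := by
  rw [← plusCount_of_length_le w le_rfl] at hc
  exact Nat.exists_eq_of_le_of_le_add_one (plusCount_zero w) (plusCount_add_one_le w) hc

end plusCount

lemma minusPos_cons (x : Bool) (w : List Bool) :
    minusPos (x :: w) = (if x = false then [0] else []) ++ (minusPos w).map Nat.succ := by
  unfold minusPos
  rw [List.length_cons, List.range_succ_eq_map, List.filter_cons, List.filter_map]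
  simp only [List.getD_cons_zero]
  cases x <;> simp [Function.comp_def]

lemma length_minusPos (w : List Bool) : (minusPos w).length = w.count false := by
  induction w with
  | nil => rfl
  | cons x w ih => cases x <;> simp [minusPos_cons, ih]

lemma getElem_minusPos_lt_iff {w : List Bool} {i : ℕ} (hi : i < (minusPos w).length) (t : ℕ) :
    (minusPos w)[i] < t ↔ i < (w.take t).count false := by
  induction w generalizing i t with
  | nil => simp [minusPos] at hi
  | cons x w ih =>
    cases t with
    | zero => simp
    | succ t =>
      cases x with
      | true =>
        simp only [minusPos_cons] at hi ⊢
        simp [ih (by simpa using hi)]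
      | false =>
        cases i with
        | zero => simp [minusPos_cons]
        | succ i =>
          simp only [minusPos_cons] at hi ⊢
          simp [ih (by simpa using hi)]

lemma wle_iff_count_false_take_le {w₀ w₁ : List Bool} (h : w₀.count false = w₁.count false) :
    wle w₀ w₁ ↔ ∀ t, (w₁.take t).count false ≤ (w₀.take t).count false := by
  have hlen : (minusPos w₀).length = (minusPos w₁).length := by
    rw [length_minusPos, length_minusPos, h]
  constructor
  · intro hle t
    by_contra! hlt
    set i := (w₀.take t).count false
    have hi : i < (minusPos w₁).length :=
      hlt.trans_le (length_minusPos w₁ ▸ (List.take_sublist t w₁).count_le false)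
    have h₁ := (getElem_minusPos_lt_iff hi t).2 hlt
    have h₀ := hle i
    rw [List.getD_eq_getElem _ _ (hlen ▸ hi), List.getD_eq_getElem _ _ hi] at h₀
    exact lt_irrefl i ((getElem_minusPos_lt_iff (hlen ▸ hi) t).1 (h₀.trans_lt h₁))
  · intro hcount i
    by_cases hi : i < (minusPos w₁).length
    · rw [List.getD_eq_getElem _ _ (hlen ▸ hi), List.getD_eq_getElem _ _ hi, ← Nat.lt_succ_iff,
        getElem_minusPos_lt_iff]
      exact ((getElem_minusPos_lt_iff hi _).1 (Nat.lt_succ_self _)).trans_le (hcount _)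
    · rw [List.getD_eq_default _ _ (by omega), List.getD_eq_default _ _ (by omega)]

lemma wle_iff_plusCount_le {w₀ w₁ : List Bool} (hlen : w₀.length = w₁.length)
    (h : w₀.count false = w₁.count false) :
    wle w₀ w₁ ↔ ∀ t, plusCount w₀ t ≤ plusCount w₁ t := by
  rw [wle_iff_count_false_take_le h]
  refine forall_congr' fun t => ?_
  have h₀ := List.count_true_add_count_false (w₀.take t)
  have h₁ := List.count_true_add_count_false (w₁.take t)
  rw [List.length_take] at h₀ h₁
  rw [plusCount, plusCount]
  omega

open Finset

lemma Fin.card_filter_le_succ {m : ℕ} (S : Finset (Fin (m + 1))) (i : Fin m) :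
    (S.filter (· ≤ i.succ)).card =
      (S.filter (· ≤ i.castSucc)).card + (decide (i.succ ∈ S)).toNat := by
  have hsplit : S.filter (· ≤ i.succ) = S.filter (fun v => v ≤ i.castSucc ∨ v = i.succ) :=
    filter_congr fun v _ => by
      simp only [Fin.le_def, Fin.ext_iff, Fin.val_succ, Fin.val_castSucc]; omega
  rw [hsplit, filter_or, card_union_of_disjoint]
  · congr 1
    by_cases h : i.succ ∈ S
    · rw [filter_eq' S, if_pos h, card_singleton, decide_eq_true h]; rfl
    · rw [filter_eq' S, if_neg h, card_empty, decide_eq_false h]; rfl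
  · rw [disjoint_filter]
    rintro v - hv rfl
    exact absurd hv (not_le.2 (Fin.castSucc_lt_succ))

lemma Finset.card_filter_le_le_iff {α : Type*} [LinearOrder α] {S : Finset α} {a : α} (ha : a ∈ S)
    (b : α) : (S.filter (· ≤ a)).card ≤ (S.filter (· ≤ b)).card ↔ a ≤ b := by
  refine ⟨fun hcard => ?_, fun hab => card_le_card fun v hv => ?_⟩
  · by_contra! hba
    refine (card_lt_card ?_).not_ge hcard
    refine (ssubset_iff_of_subset fun v hv => ?_).2 ⟨a, by simp [ha], by simp [hba]⟩
    simp only [mem_filter] at hv ⊢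
    exact ⟨hv.1, hv.2.trans hba.le⟩
  · simp only [mem_filter] at hv ⊢
    exact ⟨hv.1, hv.2.trans hab⟩

section MonotoneFin

variable {n m : ℕ} (f : Fin (n + 1) → Fin (m + 1))

def jumpWord : List Bool := List.ofFn fun i : Fin n => decide (f i.castSucc ≠ f i.succ)

def imageWord : List Bool := List.ofFn fun i : Fin m => decide (i.succ ∈ univ.image f)

@[simp] lemma length_jumpWord : (jumpWord f).length = n := List.length_ofFn

@[simp] lemma length_imageWord : (imageWord f).length = m := List.length_ofFn

lemma getD_jumpWord (i : Fin n) :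
    (jumpWord f).getD i false = decide (f i.castSucc ≠ f i.succ) := by
  simp [List.getD_eq_getElem?_getD, jumpWord]

lemma getD_imageWord (i : Fin m) :
    (imageWord f).getD i false = decide (i.succ ∈ univ.image f) := by
  simp [List.getD_eq_getElem?_getD, imageWord]

variable {f}

lemma image_Iic_eq_filter (hf : Monotone f) (t : Fin (n + 1)) :
    (Iic t).image f = (univ.image f).filter (· ≤ f t) := by
  ext v
  simp only [mem_image, mem_Iic, mem_filter, mem_univ, true_and]
  constructor
  · rintro ⟨s, hs, rfl⟩
    exact ⟨⟨s, rfl⟩, hf hs⟩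
  · rintro ⟨⟨s, rfl⟩, hs⟩
    rcases le_total s t with h | h
    · exact ⟨s, h, rfl⟩
    · exact ⟨t, le_rfl, le_antisymm hs (hf h) ▸ rfl⟩

lemma plusCount_jumpWord_add_one (hf : Monotone f) (t : Fin (n + 1)) :
    plusCount (jumpWord f) t + 1 = ((Iic t).image f).card := by
  induction t using Fin.induction with
  | zero => simp [show Iic (0 : Fin (n + 1)) = {0} from rfl]
  | succ i ih =>
    have hIic : Iic i.succ = insert i.succ (Iic i.castSucc) := by
      ext v
      simp only [mem_Iic, mem_insert, Fin.le_def, Fin.ext_iff, Fin.val_succ, Fin.val_castSucc]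
      omega
    have hmem : f i.succ ∈ (Iic i.castSucc).image f ↔ f i.castSucc = f i.succ := by
      rw [image_Iic_eq_filter hf, mem_filter]
      simp only [mem_image_of_mem f (mem_univ _), true_and]
      exact ⟨fun h => le_antisymm (hf Fin.castSucc_lt_succ.le) h, fun h => h.ge⟩
    rw [Fin.val_succ, plusCount_add_one, getD_jumpWord, hIic, image_insert, card_insert_eq_ite,
      ← ih, Fin.val_castSucc]
    by_cases h : f i.castSucc = f i.succ
    · simp [h, hmem.2 h]
    · simp [h, hmem.not.2 h]

lemma plusCount_imageWord_add_one (h0 : f 0 = 0) (s : Fin (m + 1)) :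
    plusCount (imageWord f) s + 1 = ((univ.image f).filter (· ≤ s)).card := by
  induction s using Fin.induction with
  | zero =>
    have : (univ.image f).filter (· ≤ 0) = {0} := by
      ext v
      simp only [mem_filter, mem_image, mem_univ, true_and, Fin.le_zero_iff, mem_singleton]
      exact ⟨And.right, fun hv => ⟨⟨0, h0.trans hv.symm⟩, hv⟩⟩
    rw [Fin.val_zero, plusCount_zero, this, card_singleton]
  | succ i ih =>
    rw [Fin.val_succ, plusCount_add_one, getD_imageWord, Fin.card_filter_le_succ, ← ih,
      Fin.val_castSucc, add_right_comm]

lemma count_true_jumpWord_add_one (hf : Monotone f) :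
    (jumpWord f).count true + 1 = (univ.image f).card := by
  have h := plusCount_jumpWord_add_one hf (Fin.last n)
  rwa [Fin.val_last, plusCount_of_length_le _ (length_jumpWord f).le, ← Fin.top_eq_last,
    Iic_top] at h

lemma count_true_imageWord_add_one (h0 : f 0 = 0) :
    (imageWord f).count true + 1 = (univ.image f).card := by
  have h := plusCount_imageWord_add_one h0 (Fin.last m)
  rwa [Fin.val_last, plusCount_of_length_le _ (length_imageWord f).le,
    filter_true_of_mem fun v _ => Fin.le_last v] at h

theorem le_iff_plusCount_jumpWord_le (hf : Monotone f) (h0 : f 0 = 0) (t : Fin (n + 1))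
    (s : Fin (m + 1)) : f t ≤ s ↔ plusCount (jumpWord f) t ≤ plusCount (imageWord f) s := by
  rw [← Finset.card_filter_le_le_iff (mem_image_of_mem f (mem_univ t)) s, ← image_Iic_eq_filter hf,
    ← plusCount_jumpWord_add_one hf, ← plusCount_imageWord_add_one h0, Nat.add_le_add_iff_right]

theorem eq_of_jumpWord_eq_of_imageWord_eq {g : Fin (n + 1) → Fin (m + 1)} (hf : Monotone f)
    (hg : Monotone g) (hf0 : f 0 = 0) (hg0 : g 0 = 0) (hjump : jumpWord f = jumpWord g)
    (himage : imageWord f = imageWord g) : f = g :=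
  funext fun t => eq_of_forall_ge_iff fun s => by
    rw [le_iff_plusCount_jumpWord_le hf hf0, le_iff_plusCount_jumpWord_le hg hg0, hjump, himage]

end MonotoneFin

section GaloisConnection

variable {n m : ℕ} {w₀ w₁ : List Bool}

lemma exists_forall_le_iff_plusCount_le (hm : w₁.length ≤ m)
    (hcount : w₀.count true ≤ w₁.count true) :
    ∃ f : Fin (n + 1) → Fin (m + 1), ∀ t s, f t ≤ s ↔ plusCount w₀ t ≤ plusCount w₁ s := by
  have hne (t : Fin (n + 1)) :
      (univ.filter fun s : Fin (m + 1) => plusCount w₀ t ≤ plusCount w₁ s).Nonempty := by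
    refine ⟨Fin.last m, mem_filter.2 ⟨mem_univ _, ?_⟩⟩
    rw [Fin.val_last, plusCount_of_length_le w₁ hm]
    exact (plusCount_le_count w₀ t).trans hcount
  refine ⟨fun t => (univ.filter fun s : Fin (m + 1) => plusCount w₀ t ≤ plusCount w₁ s).min'
    (hne t), fun t s => ⟨fun h => ?_, fun h => ?_⟩⟩
  · exact (mem_filter.1 (min'_mem _ (hne t))).2.trans (monotone_plusCount w₁ h)
  · exact min'_le _ s (mem_filter.2 ⟨mem_univ s, h⟩)

variable {f : Fin (n + 1) → Fin (m + 1)}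
  (hgal : ∀ t s, f t ≤ s ↔ plusCount w₀ t ≤ plusCount w₁ s)
include hgal

lemma monotone_of_forall_le_iff_plusCount_le : Monotone f := fun t t' h =>
  (hgal t (f t')).2 ((monotone_plusCount w₀ h).trans ((hgal t' (f t')).1 le_rfl))

lemma map_zero_of_forall_le_iff_plusCount_le : f 0 = 0 :=
  le_antisymm ((hgal 0 0).2 (by simp)) (Fin.zero_le _)

lemma plusCount_map_of_forall_le_iff_plusCount_le (t : Fin (n + 1)) :
    plusCount w₁ (f t) = plusCount w₀ t := by
  refine le_antisymm ?_ ((hgal t (f t)).1 le_rfl)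
  rcases Fin.eq_zero_or_eq_succ (f t) with h | ⟨s, h⟩
  · simp [h]
  · have hlt : plusCount w₁ s < plusCount w₀ t := by
      simpa [h, Fin.le_castSucc_iff] using (hgal t s.castSucc).not
    rw [h, Fin.val_succ]
    exact (plusCount_add_one_le w₁ s).trans hlt

lemma jumpWord_eq_of_forall_le_iff_plusCount_le (hn : w₀.length = n) : jumpWord f = w₀ := by
  refine List.ext_getElem (by simp [hn]) fun i hi _ => ?_
  obtain ⟨j, rfl⟩ : ∃ j : Fin n, (j : ℕ) = i := ⟨⟨i, by simpa using hi⟩, rfl⟩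
  rw [← List.getD_eq_getElem _ false, ← List.getD_eq_getElem _ false, getD_jumpWord]
  have hP : f j.castSucc = f j.succ ↔ plusCount w₀ j = plusCount w₀ (j + 1) := by
    constructor
    · intro h
      have h' := congrArg (fun v : Fin (m + 1) => plusCount w₁ v) h
      simpa only [plusCount_map_of_forall_le_iff_plusCount_le hgal, Fin.val_succ,
        Fin.val_castSucc] using h'
    · intro h
      exact eq_of_forall_ge_iff fun s => by rw [hgal, hgal, Fin.val_succ, Fin.val_castSucc, h]
  rw [plusCount_add_one] at hP
  cases hw : w₀.getD j false <;> simp_all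

lemma imageWord_eq_of_forall_le_iff_plusCount_le (hn : w₀.length ≤ n) (hm : w₁.length = m)
    (hcount : w₁.count true ≤ w₀.count true) : imageWord f = w₁ := by
  refine List.ext_getElem (by simp [hm]) fun i hi _ => ?_
  obtain ⟨j, rfl⟩ : ∃ j : Fin m, (j : ℕ) = i := ⟨⟨i, by simpa using hi⟩, rfl⟩
  rw [← List.getD_eq_getElem _ false, ← List.getD_eq_getElem _ false, getD_imageWord]
  have hmem : j.succ ∈ univ.image f ↔ plusCount w₁ j < plusCount w₁ (j + 1) := by
    have hsucc (t : Fin (n + 1)) : j.succ ≤ f t ↔ plusCount w₁ j < plusCount w₀ t := by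
      rw [← Fin.castSucc_lt_iff_succ_le, ← not_le, hgal, not_le, Fin.val_castSucc]
    constructor
    · intro h
      obtain ⟨t, -, ht⟩ := mem_image.1 h
      have hle := (hgal t j.succ).1 ht.le
      rw [Fin.val_succ] at hle
      exact ((hsucc t).1 ht.ge).trans_le hle
    · intro h
      obtain ⟨t, ht, hPt⟩ :=
        exists_plusCount_eq w₀ ((plusCount_le_count w₁ (j + 1)).trans hcount)
      refine mem_image.2 ⟨⟨t, by omega⟩, mem_univ _, le_antisymm ((hgal _ _).2 ?_) ?_⟩
      · rw [Fin.val_succ, hPt]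
      · rw [hsucc, hPt]
        exact h
  rw [plusCount_add_one] at hmem
  cases hw : w₁.getD j false <;> simp_all

end GaloisConnection

section Bijection

variable {n k : ℕ}

lemma length_eq_of_memW {w : List Bool} (hk : k ≤ n) (hw : memW (n - k) k w) : w.length = n := by
  have := List.count_true_add_count_false w
  rw [hw.1, hw.2] at this
  omega

lemma jumpWord_imageWord_mem {f : Fin (n + 1) → Fin (n + 1)} (hf : Monotone f)
    (hle : ∀ i, f i ≤ i) (hcard : (univ.image f).card = k + 1) :
    memW (n - k) k (jumpWord f) ∧ memW (n - k) k (imageWord f) ∧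
      wle (jumpWord f) (imageWord f) := by
  have h0 : f 0 = 0 := le_antisymm (hle 0) (Fin.zero_le _)
  have hjump := count_true_jumpWord_add_one hf
  have himage := count_true_imageWord_add_one h0
  have hj := List.count_true_add_count_false (jumpWord f)
  have hi := List.count_true_add_count_false (imageWord f)
  simp only [length_jumpWord, length_imageWord] at hj hi
  refine ⟨⟨by omega, by omega⟩, ⟨by omega, by omega⟩, ?_⟩
  rw [wle_iff_plusCount_le (by simp) (by omega)]
  intro t
  rw [← plusCount_min_length, ← plusCount_min_length (imageWord f), length_jumpWord,
    length_imageWord]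
  exact (le_iff_plusCount_jumpWord_le hf h0 _ _).1 (hle ⟨min t n, by omega⟩)

def wordPair
    (f : {f : Fin (n + 1) → Fin (n + 1) //
      Monotone f ∧ (∀ i, f i ≤ i) ∧ (univ.image f).card = k + 1}) :
    {p : List Bool × List Bool // memW (n - k) k p.1 ∧ memW (n - k) k p.2 ∧ wle p.1 p.2} :=
  ⟨(jumpWord f.1, imageWord f.1), jumpWord_imageWord_mem f.2.1 f.2.2.1 f.2.2.2⟩

lemma wordPair_injective : Function.Injective (wordPair (n := n) (k := k)) := by
  rintro ⟨f, hf, hfle, _⟩ ⟨g, hg, hgle, _⟩ h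
  simp only [wordPair, Subtype.mk.injEq, Prod.mk.injEq] at h
  exact Subtype.ext (eq_of_jumpWord_eq_of_imageWord_eq hf hg
    (le_antisymm (hfle 0) (Fin.zero_le _)) (le_antisymm (hgle 0) (Fin.zero_le _)) h.1 h.2)

lemma wordPair_surjective (hk : k ≤ n) : Function.Surjective (wordPair (n := n) (k := k)) := by
  rintro ⟨⟨w₀, w₁⟩, h₀, h₁, hwle⟩
  have hl₀ := length_eq_of_memW hk h₀
  have hl₁ := length_eq_of_memW hk h₁
  have hcount : w₀.count true = w₁.count true := h₀.2.trans h₁.2.symm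
  obtain ⟨f, hgal⟩ := exists_forall_le_iff_plusCount_le (n := n) hl₁.le hcount.le
  have h0 := map_zero_of_forall_le_iff_plusCount_le hgal
  have hjump := jumpWord_eq_of_forall_le_iff_plusCount_le hgal hl₀
  have himage := imageWord_eq_of_forall_le_iff_plusCount_le hgal hl₀.le hl₁ hcount.ge
  have hdom := (wle_iff_plusCount_le (hl₀.trans hl₁.symm) (h₀.1.trans h₁.1.symm)).1 hwle
  have hcard := count_true_imageWord_add_one h0
  rw [himage, h₁.2] at hcard
  exact ⟨⟨f, monotone_of_forall_le_iff_plusCount_le hgal, fun t => (hgal t t).2 (hdom t),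
    hcard.symm⟩, Subtype.ext (Prod.ext hjump himage)⟩

end Bijection

/-- Bijection between comparable pairs `w₀ ⪯ w₁` in `W(n-k, k)` and monotone
functions `f : {1,…,n+1} → {1,…,n+1}` with `f i ≤ i` taking exactly `k+1`
distinct values. -/
theorem stmt5 (n k : ℕ) (hk : k ≤ n) :
    Nonempty
      ({p : List Bool × List Bool //
          memW (n - k) k p.1 ∧ memW (n - k) k p.2 ∧ wle p.1 p.2} ≃
        {f : Fin (n+1) → Fin (n+1) //
          Monotone f ∧ (∀ i, f i ≤ i) ∧ (Finset.univ.image f).card = k + 1}) :=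
  ⟨(Equiv.ofBijective wordPair ⟨wordPair_injective, wordPair_surjective hk⟩).symm⟩
end

section
/- The number of monotone increasing functions f : {1,...,n} → {1,...,n} satisfying f(i) ≤ i for all i and taking exactly k distinct values equals the Narayana number N(n,k) = (1/n) * C(n,k) * C(n,k-1). -/
/-!
A monotone `f : Fin n → Fin n` is determined by its set `A` of records (the points where a
new value appears) and its image `V`. Both have `k` elements, `0 ∈ A`, and every such pair
arises; the condition `f ≤ id` becomes the ballot condition `#(A ∩ [0, t]) ≤ #(V ∩ [0, t])`
for all `t`.
The pairs violating it are counted by reflection: exchanging the parts of `A` and `V` beyond the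
first crossing is an involution that matches them with all pairs of sizes `(k + 1, k - 1)`.
So the count is `C(n-1,k-1) C(n,k) - C(n-1,k) C(n,k-1)`, which equals `N(n,k)`.
-/

/-- The Narayana number `N(n,k) = (1/n)·C(n,k)·C(n,k-1)`. -/
def narayana (n k : ℕ) : ℕ := n.choose k * n.choose (k-1) / n

open Finset

namespace Narayana

section Records

variable {α β : Type*} [LinearOrder α] [Fintype α] [LinearOrder β]

def records (f : α → β) : Finset α := {i | ∀ j < i, f j < f i}

theorem mem_records {f : α → β} {i : α} : i ∈ records f ↔ ∀ j < i, f j < f i := by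
  simp [records]

theorem strictMonoOn_records (f : α → β) : StrictMonoOn f (records f) :=
  fun _ _ _ hb h => mem_records.1 hb _ h

theorem bot_mem_records [OrderBot α] (f : α → β) : ⊥ ∈ records f :=
  mem_records.2 fun _ hj => absurd hj not_lt_bot

theorem records_comp_of_strictMono {γ : Type*} [LinearOrder γ] {g : β → γ} (hg : StrictMono g)
    (f : α → β) : records (g ∘ f) = records f := by
  ext i
  simp only [mem_records, Function.comp, hg.lt_iff_lt]

variable {f : α → β}

theorem exists_mem_records (hf : Monotone f) (i : α) :
    ∃ a ∈ records f, f a = f i ∧ ∀ j, f i ≤ f j → a ≤ j := by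
  have hne : ({j | f j = f i} : Finset α).Nonempty := ⟨i, by simp⟩
  set a := ({j | f j = f i} : Finset α).min' hne
  have hfa : f a = f i := (mem_filter.1 (min'_mem _ hne)).2
  have hmin : ∀ j, f j = f i → a ≤ j := fun j hj => min'_le _ j (by simp [hj])
  refine ⟨a, mem_records.2 fun j hj => (hf hj.le).lt_of_ne fun h => ?_, hfa, fun j hj => ?_⟩
  · exact hj.not_ge (hmin j (h.trans hfa))
  · by_contra! hlt
    exact hlt.not_ge (hmin j (le_antisymm (hfa ▸ hf hlt.le) hj))

theorem image_filter_records_le (hf : Monotone f) (i : α) :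
    {a ∈ records f | a ≤ i}.image f = {v ∈ univ.image f | v ≤ f i} := by
  ext v
  simp only [mem_image, mem_filter, mem_univ, true_and]
  constructor
  · rintro ⟨a, ⟨-, hai⟩, rfl⟩
    exact ⟨⟨a, rfl⟩, hf hai⟩
  · rintro ⟨⟨j, rfl⟩, hji⟩
    obtain ⟨a, ha, hfa, hmin⟩ := exists_mem_records hf j
    exact ⟨a, ⟨ha, hmin i hji⟩, hfa⟩

theorem card_filter_records_le (hf : Monotone f) (i : α) :
    #{a ∈ records f | a ≤ i} = #{v ∈ univ.image f | v ≤ f i} := by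
  rw [← image_filter_records_le hf i,
    card_image_of_injOn ((strictMonoOn_records f).injOn.mono fun _ hx => (mem_filter.1 hx).1)]

theorem card_records (hf : Monotone f) : #(records f) = #(univ.image f) := by
  rw [← card_image_of_injOn (strictMonoOn_records f).injOn]
  congr 1
  ext v
  simp only [mem_image, mem_univ, true_and]
  refine ⟨fun ⟨a, _, ha⟩ => ⟨a, ha⟩, fun ⟨i, hi⟩ => ?_⟩
  obtain ⟨a, ha, hfa, -⟩ := exists_mem_records hf i
  exact ⟨a, ha, hfa.trans hi⟩

theorem card_filter_le_lt_card_filter_le (V : Finset β) {x y : β} (hy : y ∈ V)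
    (hxy : x < y) : #{v ∈ V | v ≤ x} < #{v ∈ V | v ≤ y} := by
  refine card_lt_card ((ssubset_iff_of_subset ?_).2 ⟨y, ?_, ?_⟩)
  · exact monotone_filter_right V fun _ _ h => h.trans hxy.le
  · simpa using hy
  · simp [hxy]

theorem strictMonoOn_card_filter_le (V : Finset β) :
    StrictMonoOn (fun v => #{x ∈ V | x ≤ v}) V :=
  fun _ _ _ hy hxy => card_filter_le_lt_card_filter_le V hy hxy

theorem eq_of_records_eq_of_image_eq {g : α → β} (hf : Monotone f) (hg : Monotone g)
    (hr : records f = records g) (hi : univ.image f = univ.image g) : f = g := by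
  funext i
  refine (strictMonoOn_card_filter_le _).injOn (mem_image_of_mem f (mem_univ i))
    (hi ▸ mem_image_of_mem g (mem_univ i)) ?_
  rw [← card_filter_records_le hf, hr, card_filter_records_le hg, hi]

end Records

section Realization

variable {α β : Type*} [LinearOrder α] [OrderBot α] [LinearOrder β] {A : Finset α}

def floorIn (hA : ⊥ ∈ A) (i : α) : A :=
  ⟨{a ∈ A | a ≤ i}.max' ⟨⊥, mem_filter.2 ⟨hA, bot_le⟩⟩, (mem_filter.1 (max'_mem _ _)).1⟩

theorem floorIn_le (hA : ⊥ ∈ A) (i : α) : (floorIn hA i : α) ≤ i :=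
  (mem_filter.1 (max'_mem {a ∈ A | a ≤ i} ⟨⊥, mem_filter.2 ⟨hA, bot_le⟩⟩)).2

theorem le_floorIn (hA : ⊥ ∈ A) {a i : α} (ha : a ∈ A) (hai : a ≤ i) : a ≤ floorIn hA i :=
  le_max' _ a (mem_filter.2 ⟨ha, hai⟩)

theorem floorIn_of_mem (hA : ⊥ ∈ A) {a : α} (ha : a ∈ A) : (floorIn hA a : α) = a :=
  le_antisymm (floorIn_le hA a) (le_floorIn hA ha le_rfl)

theorem monotone_floorIn (hA : ⊥ ∈ A) : Monotone (floorIn hA) := fun _ _ hij =>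
  Subtype.coe_le_coe.1 (le_floorIn hA (floorIn hA _).2 ((floorIn_le hA _).trans hij))

variable [Fintype α]

theorem records_floorIn (hA : ⊥ ∈ A) : records (floorIn hA) = A := by
  ext i
  rw [mem_records]
  refine ⟨fun hi => ?_, fun hi j hj => ?_⟩
  · by_contra hiA
    have hlt := hi _ ((floorIn_le hA i).lt_of_ne fun h => hiA (h ▸ (floorIn hA i).2))
    rw [← Subtype.coe_lt_coe, floorIn_of_mem hA (floorIn hA i).2] at hlt
    exact hlt.false
  · rw [← Subtype.coe_lt_coe, floorIn_of_mem hA hi]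
    exact (floorIn_le hA j).trans_lt hj

theorem exists_monotone_records_eq_image_eq (hA : ⊥ ∈ A) {V : Finset β} (h : #A = #V) :
    ∃ f : α → β, Monotone f ∧ records f = A ∧ univ.image f = V := by
  let φ : A ≃o V := (A.orderIsoOfFin rfl).symm.trans (V.orderIsoOfFin h.symm)
  refine ⟨(Subtype.val ∘ φ) ∘ floorIn hA, ?_, ?_, ?_⟩
  · exact (Subtype.mono_coe _).comp (φ.monotone.comp (monotone_floorIn hA))
  · rw [records_comp_of_strictMono ((Subtype.strictMono_coe _).comp φ.strictMono),
      records_floorIn]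
  · ext v
    simp only [mem_image, mem_univ, true_and, Function.comp_apply]
    refine ⟨fun ⟨i, hi⟩ => hi ▸ (φ _).2, fun hv => ⟨φ.symm ⟨v, hv⟩, ?_⟩⟩
    rw [show floorIn hA (φ.symm ⟨v, hv⟩) = φ.symm ⟨v, hv⟩ from
      Subtype.ext (floorIn_of_mem hA (φ.symm _).2), OrderIso.apply_symm_apply]

end Realization

section Reflection

variable {n : ℕ}

def prefixCard (S : Finset (Fin n)) (t : ℕ) : ℕ := #{x ∈ S | x.val ≤ t}

theorem prefixCard_mono (S : Finset (Fin n)) : Monotone (prefixCard S) := fun _ _ hst =>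
  card_le_card (monotone_filter_right S fun _ _ h => h.trans hst)

theorem prefixCard_add_one_le (S : Finset (Fin n)) (t : ℕ) :
    prefixCard S (t + 1) ≤ prefixCard S t + 1 := by
  have h : #({x ∈ S | x.val ≤ t + 1} \ {x ∈ S | x.val ≤ t}) ≤ 1 :=
    card_le_one.2 fun a ha b hb => by
      simp only [mem_sdiff, mem_filter, not_and, not_le] at ha hb
      exact Fin.ext (by have := ha.2 ha.1.1; have := hb.2 hb.1.1; omega)
  exact (card_le_card_sdiff_add_card (t := {x ∈ S | x.val ≤ t})).trans
    (by rw [prefixCard]; omega)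

theorem prefixCard_zero_le_one (S : Finset (Fin n)) : prefixCard S 0 ≤ 1 :=
  card_le_one.2 fun a ha b hb => by
    simp only [mem_filter, nonpos_iff_eq_zero] at ha hb
    exact Fin.ext (ha.2.trans hb.2.symm)

theorem prefixCard_of_le (S : Finset (Fin n)) {t : ℕ} (h : n ≤ t + 1) : prefixCard S t = #S :=
  congrArg card (filter_true_of_mem fun x _ => by omega : {x ∈ S | x.val ≤ t} = S)

def splice (t : ℕ) (A B : Finset (Fin n)) : Finset (Fin n) :=
  {x ∈ A | x.val ≤ t} ∪ {x ∈ B | t < x.val}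

theorem splice_splice (t : ℕ) (A B : Finset (Fin n)) :
    splice t (splice t A B) (splice t B A) = A := by
  ext x
  simp only [splice, mem_union, mem_filter]
  by_cases h : x.val ≤ t <;> simp [h, not_lt.2, lt_of_not_ge]

theorem prefixCard_splice_of_le {s t : ℕ} (h : s ≤ t) (A B : Finset (Fin n)) :
    prefixCard (splice t A B) s = prefixCard A s := by
  unfold prefixCard splice
  congr 1
  ext x
  simp only [mem_filter, mem_union]
  constructor
  · rintro ⟨⟨hx, -⟩ | ⟨-, hx'⟩, hxs⟩
    · exact ⟨hx, hxs⟩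
    · omega
  · rintro ⟨hx, hxs⟩
    exact ⟨Or.inl ⟨hx, hxs.trans h⟩, hxs⟩

theorem card_splice (t : ℕ) (A B : Finset (Fin n)) :
    #(splice t A B) + prefixCard B t = prefixCard A t + #B := by
  rw [splice, card_union_of_disjoint, prefixCard, prefixCard,
    ← card_filter_add_card_filter_not (s := B) (fun x : Fin n => x.val ≤ t)]
  · simp only [not_le]
    omega
  · exact disjoint_filter_filter' _ _ fun _ h₁ h₂ x hx => not_lt_of_ge (h₁ x hx) (h₂ x hx)

def Crossing (p : Finset (Fin n) × Finset (Fin n)) : Prop :=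
  ∃ t, prefixCard p.2 t < prefixCard p.1 t

noncomputable instance : DecidablePred (Crossing (n := n)) := Classical.decPred _

variable {p : Finset (Fin n) × Finset (Fin n)}

theorem not_crossing_iff :
    ¬Crossing p ↔ ∀ t, prefixCard p.1 t ≤ prefixCard p.2 t := by
  simp [Crossing]

theorem crossing_of_card_lt (h : #p.2 < #p.1) : Crossing p :=
  ⟨n, by rwa [prefixCard_of_le _ n.le_succ, prefixCard_of_le _ n.le_succ]⟩

-- Prefix counts grow by at most one per step, so at the first crossing they differ by one.
theorem prefixCard_find_crossing (h : Crossing p) :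
    prefixCard p.1 (Nat.find h) = prefixCard p.2 (Nat.find h) + 1 := by
  have hlt := Nat.find_spec h
  cases hs : Nat.find h with
  | zero =>
    rw [hs] at hlt
    have := prefixCard_zero_le_one p.1
    omega
  | succ s =>
    have hmin := Nat.find_min h (m := s) (by omega)
    rw [hs] at hlt
    have := prefixCard_add_one_le p.1 s
    have := prefixCard_mono p.2 (Nat.le_add_right s 1)
    omega

def tailSwap (t : ℕ) (p : Finset (Fin n) × Finset (Fin n)) : Finset (Fin n) × Finset (Fin n) :=
  (splice t p.1 p.2, splice t p.2 p.1)

theorem tailSwap_tailSwap (t : ℕ) (p : Finset (Fin n) × Finset (Fin n)) :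
    tailSwap t (tailSwap t p) = p :=
  Prod.ext (splice_splice t p.1 p.2) (splice_splice t p.2 p.1)

theorem exists_find_crossing_tailSwap (h : Crossing p) :
    ∃ h' : Crossing (tailSwap (Nat.find h) p), Nat.find h' = Nat.find h := by
  have hagree : ∀ s ≤ Nat.find h, (prefixCard (tailSwap (Nat.find h) p).2 s <
      prefixCard (tailSwap (Nat.find h) p).1 s ↔ prefixCard p.2 s < prefixCard p.1 s) :=
    fun s hs => by simp only [tailSwap, prefixCard_splice_of_le hs]
  have h' : Crossing (tailSwap (Nat.find h) p) := ⟨_, (hagree _ le_rfl).2 (Nat.find_spec h)⟩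
  refine ⟨h', (Nat.find_eq_iff h').2 ⟨(hagree _ le_rfl).2 (Nat.find_spec h), fun s hs => ?_⟩⟩
  rw [hagree s hs.le]
  exact Nat.find_min h hs

noncomputable def reflect (p : Finset (Fin n) × Finset (Fin n)) :
    Finset (Fin n) × Finset (Fin n) :=
  if h : Crossing p then tailSwap (Nat.find h) p else p

theorem reflect_of_crossing (h : Crossing p) :
    reflect p = tailSwap (Nat.find h) p :=
  dif_pos h

theorem crossing_reflect (h : Crossing p) :
    Crossing (reflect p) := by
  obtain ⟨h', -⟩ := exists_find_crossing_tailSwap h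
  rwa [reflect_of_crossing h]

theorem reflect_reflect (h : Crossing p) :
    reflect (reflect p) = p := by
  obtain ⟨h', hfind⟩ := exists_find_crossing_tailSwap h
  rw [reflect_of_crossing h, reflect_of_crossing h', hfind, tailSwap_tailSwap]

end Reflection

section Counting

noncomputable def pairs (n : ℕ) [NeZero n] (a b : ℕ) :
    Finset (Finset (Fin n) × Finset (Fin n)) :=
  {A ∈ (univ : Finset (Fin n)).powersetCard a | ⊥ ∈ A} ×ˢ univ.powersetCard b

variable {n : ℕ} [NeZero n]

theorem mem_pairs {a b : ℕ} {p : Finset (Fin n) × Finset (Fin n)} :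
    p ∈ pairs n a b ↔ #p.1 = a ∧ #p.2 = b ∧ ⊥ ∈ p.1 := by
  simp only [pairs, mem_product, mem_filter, mem_powersetCard, subset_univ, true_and]
  tauto

theorem card_pairs (a b : ℕ) :
    #(pairs n (a + 1) b) = (n - 1).choose a * n.choose b := by
  have h := card_filter_powersetCard_subset {⊥} (univ : Finset (Fin n)) (a + 1)
    (subset_univ _) (by simp)
  simp only [singleton_subset_iff, card_univ, Fintype.card_fin, card_singleton,
    add_tsub_cancel_right] at h
  rw [pairs, card_product, h, card_powersetCard, card_univ, Fintype.card_fin]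

theorem reflect_mem_pairs {a b : ℕ} {p : Finset (Fin n) × Finset (Fin n)}
    (hp : p ∈ pairs n (a + 1) b) (h : Crossing p) : reflect p ∈ pairs n (b + 1) a := by
  obtain ⟨hA, hV, h0⟩ := mem_pairs.1 hp
  have hfind := prefixCard_find_crossing h
  have c1 : #(tailSwap (Nat.find h) p).1 + prefixCard p.2 (Nat.find h) =
      prefixCard p.1 (Nat.find h) + #p.2 := card_splice _ p.1 p.2
  have c2 : #(tailSwap (Nat.find h) p).2 + prefixCard p.1 (Nat.find h) =
      prefixCard p.2 (Nat.find h) + #p.1 := card_splice _ p.2 p.1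
  rw [reflect_of_crossing h, mem_pairs]
  refine ⟨by omega, by omega, ?_⟩
  exact mem_union_left _ (mem_filter.2 ⟨h0, by rw [bot_eq_zero]; exact Nat.zero_le _⟩)

theorem card_filter_crossing_pairs (a b : ℕ) :
    #{p ∈ pairs n (a + 1) b | Crossing p} = #{p ∈ pairs n (b + 1) a | Crossing p} := by
  have hmaps : ∀ {a b : ℕ}, ∀ p ∈ {p ∈ pairs n (a + 1) b | Crossing p},
      reflect p ∈ {p ∈ pairs n (b + 1) a | Crossing p} := fun p hp => by
    obtain ⟨hp, h⟩ := mem_filter.1 hp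
    exact mem_filter.2 ⟨reflect_mem_pairs hp h, crossing_reflect h⟩
  exact card_bij' (fun p _ => reflect p) (fun p _ => reflect p) hmaps hmaps
    (fun p hp => reflect_reflect (mem_filter.1 hp).2)
    (fun p hp => reflect_reflect (mem_filter.1 hp).2)

theorem card_filter_not_crossing_pairs (k : ℕ) :
    #{p ∈ pairs n (k + 1) (k + 1) | ¬Crossing p} =
      (n - 1).choose k * n.choose (k + 1) - (n - 1).choose (k + 1) * n.choose k := by
  have hall : {p ∈ pairs n (k + 1 + 1) k | Crossing p} = pairs n (k + 1 + 1) k :=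
    filter_true_of_mem fun p hp => by
      obtain ⟨hA, hV, -⟩ := mem_pairs.1 hp
      exact crossing_of_card_lt (by omega)
  have h := card_filter_add_card_filter_not (s := pairs n (k + 1) (k + 1)) Crossing
  rw [card_filter_crossing_pairs, hall, card_pairs, card_pairs] at h
  omega

end Counting

section Bijection

variable {n : ℕ} {f : Fin n → Fin n}

theorem prefixCard_val (S : Finset (Fin n)) (i : Fin n) :
    prefixCard S i = #{x ∈ S | x ≤ i} :=
  rfl

theorem prefixCard_records_le_of_le_self (hle : ∀ i, f i ≤ i) (t : ℕ) :
    prefixCard (records f) t ≤ prefixCard (univ.image f) t := by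
  refine card_le_card_of_injOn f (fun a ha => ?_) ((strictMonoOn_records f).injOn.mono ?_)
  · simp only [coe_filter, Set.mem_ofPred_eq] at ha ⊢
    exact ⟨mem_image_of_mem f (mem_univ a), (show (f a : ℕ) ≤ a from hle a).trans ha.2⟩
  · exact fun _ ha => (mem_filter.1 ha).1

theorem le_self_of_prefixCard_records_le (hf : Monotone f)
    (h : ∀ t, prefixCard (records f) t ≤ prefixCard (univ.image f) t) (i : Fin n) : f i ≤ i := by
  by_contra! hlt
  have := card_filter_le_lt_card_filter_le _ (mem_image_of_mem f (mem_univ i)) hlt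
  rw [← card_filter_records_le hf, ← prefixCard_val, ← prefixCard_val] at this
  exact (h i).not_gt this

theorem le_self_iff_prefixCard_records_le (hf : Monotone f) :
    (∀ i, f i ≤ i) ↔ ∀ t, prefixCard (records f) t ≤ prefixCard (univ.image f) t :=
  ⟨prefixCard_records_le_of_le_self, le_self_of_prefixCard_records_le hf⟩

theorem ncard_monotone_le_self [NeZero n] (k : ℕ) :
    {f : Fin n → Fin n | Monotone f ∧ (∀ i, f i ≤ i) ∧ #(univ.image f) = k}.ncard =
      #{p ∈ pairs n k k | ¬Crossing p} := by
  rw [← Set.ncard_coe_finset]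
  refine Set.ncard_congr (fun f _ => (records f, univ.image f)) ?_ ?_ ?_
  · rintro f ⟨hf, hle, hk⟩
    rw [mem_coe, mem_filter, mem_pairs, not_crossing_iff]
    exact ⟨⟨(card_records hf).trans hk, hk, bot_mem_records f⟩,
      (le_self_iff_prefixCard_records_le hf).1 hle⟩
  · rintro f g ⟨hf, -⟩ ⟨hg, -⟩ h
    exact eq_of_records_eq_of_image_eq hf hg (congrArg Prod.fst h) (congrArg Prod.snd h)
  · rintro ⟨A, V⟩ hp
    rw [mem_coe, mem_filter, mem_pairs, not_crossing_iff] at hp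
    obtain ⟨⟨hA, hV, h0⟩, hball⟩ := hp
    obtain ⟨f, hf, rfl, rfl⟩ := exists_monotone_records_eq_image_eq h0 (hA.trans hV.symm)
    exact ⟨f, ⟨hf, (le_self_iff_prefixCard_records_le hf).2 hball, hV⟩, rfl⟩

end Bijection

theorem narayana_eq_choose_mul_sub {n k : ℕ} (h1 : 1 ≤ k) (h2 : k ≤ n) :
    narayana n k = (n - 1).choose (k - 1) * n.choose k - (n - 1).choose k * n.choose (k - 1) := by
  obtain ⟨m, rfl⟩ : ∃ m, n = m + 1 := ⟨n - 1, by omega⟩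
  obtain ⟨j, rfl⟩ : ∃ j, k = j + 1 := ⟨k - 1, by omega⟩
  have hj : j ≤ m := by omega
  have f1 : (m + 1) * m.choose j = (m + 1).choose (j + 1) * (j + 1) :=
    Nat.add_one_mul_choose_eq m j
  have f2 : (m + 1).choose (j + 1) = m.choose j + m.choose (j + 1) := Nat.choose_succ_succ m j
  have f3 : (m + 1).choose (j + 1) * (j + 1) = (m + 1).choose j * (m + 1 - j) :=
    Nat.choose_succ_right_eq (m + 1) j
  have key : (m + 1) * (m.choose j * (m + 1).choose (j + 1)) =
      (m + 1).choose (j + 1) * (m + 1).choose j +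
        (m + 1) * (m.choose (j + 1) * (m + 1).choose j) := by
    zify [hj, hj.trans m.le_succ] at f1 f2 f3 ⊢
    linear_combination (((m + 1).choose (j + 1) : ℤ) + ((m + 1).choose j : ℤ)) * f1
      + ((m + 1 : ℤ) * ((m + 1).choose j : ℤ)) * f2 + ((m + 1).choose (j + 1) : ℤ) * f3
  replace key : (m + 1).choose (j + 1) * (m + 1).choose j =
      (m + 1) * (m.choose j * (m + 1).choose (j + 1) - m.choose (j + 1) * (m + 1).choose j) := by
    rw [Nat.mul_sub]; omega
  simp only [narayana, Nat.add_sub_cancel]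
  rw [key, Nat.mul_div_cancel_left _ m.succ_pos]

end Narayana

/-- The number of monotone `f : Fin n → Fin n` with `f i ≤ i` taking exactly
`k` distinct values is the Narayana number `N(n,k)`. -/
theorem stmt6 (n k : ℕ) (h1 : 1 ≤ k) (h2 : k ≤ n) :
    {f : Fin n → Fin n |
        Monotone f ∧ (∀ i, f i ≤ i) ∧ (Finset.univ.image f).card = k}.ncard
      = narayana n k := by
  have : NeZero n := ⟨by omega⟩
  obtain ⟨j, rfl⟩ : ∃ j, k = j + 1 := ⟨k - 1, by omega⟩
  rw [Narayana.ncard_monotone_le_self, Narayana.card_filter_not_crossing_pairs,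
    Narayana.narayana_eq_choose_mul_sub h1 h2, Nat.add_sub_cancel]
end

section
/- The Narayana numbers satisfy the recursion N(n+1, k+1) = N(n, k+1) + N(n, k) + Σ_{n_1+n_2=n, k_1+k_2=k-1, n_i ≥ 1} N(n_1, k_1+1) · N(n_2, k_2+1), with appropriate conventions for boundary terms. -/
/-!
Let `F = ∑ C_{n,k} xⁿ tᵏ`. The recursion is the coefficientwise form of the functional equation
`F = x (1 + F) (1 + t F) = x (1 + (1 + t) F + t F²)`. Lagrange inversion predicts
`[xⁿ tᵏ] Fᵐ = (m / n) C(n,k) C(n,m+k)` (`powCoeff m n k`), so we define series `P m`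
(`seriesPow m`) by these coefficients. Pascal's rule gives
`P (m + 1) = x (P m + (1 + t) P (m + 1) + t P (m + 2))`, and this recursion forces
`P a * P b = P (a + b)` by induction on the degree in `x`. Hence `P 2 = (P 1)²`, and the recursion
for `P 1 = F` is the functional equation above.
-/

/-- The shifted Narayana number `C_{n,k} = N(n,k+1) = (1/n)·C(n,k+1)·C(n,k)`. -/
def narayanaC (n k : ℕ) : ℕ := n.choose (k+1) * n.choose k / n

open PowerSeries

namespace Narayana

theorem cast_choose_succ {K : Type*} [Field K] [CharZero K] (n k : ℕ) :
    (n.choose (k + 1) : K) = n.choose k * (n - k) / (k + 1) := by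
  rw [eq_div_iff (Nat.cast_add_one_ne_zero k)]
  rcases le_or_gt k n with h | h
  · have := congrArg (Nat.cast : ℕ → K) (Nat.choose_succ_right_eq n k)
    push_cast [Nat.cast_sub h] at this
    exact this
  · simp [Nat.choose_eq_zero_of_lt h, Nat.choose_eq_zero_of_lt (Nat.lt_succ_of_lt h)]

def powCoeff (m n k : ℕ) : ℚ :=
  if n = 0 then if m = 0 ∧ k = 0 then 1 else 0
  else m * n.choose k * n.choose (m + k) / n

theorem powCoeff_succ_succ_zero (m n : ℕ) :
    powCoeff (m + 1) (n + 1) 0 = powCoeff m n 0 + powCoeff (m + 1) n 0 := by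
  rcases Nat.eq_zero_or_pos n with rfl | hn
  · cases m <;> simp [powCoeff, Nat.choose_eq_zero_iff]
  · simp only [powCoeff, Nat.add_one_ne_zero, hn.ne', if_false, Nat.choose_zero_right, add_zero]
    rw [Nat.choose_succ_succ']
    push_cast
    rw [cast_choose_succ n m]
    field_simp
    ring

theorem powCoeff_succ_succ_succ (m n j : ℕ) :
    powCoeff (m + 1) (n + 1) (j + 1) = powCoeff m n (j + 1) + powCoeff (m + 1) n (j + 1)
      + powCoeff (m + 1) n j + powCoeff (m + 2) n j := by
  rcases Nat.eq_zero_or_pos n with rfl | hn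
  · cases j <;> simp [powCoeff, Nat.choose_eq_zero_iff]
  · simp only [powCoeff, Nat.add_one_ne_zero, hn.ne', if_false]
    rw [show m + 1 + (j + 1) = m + j + 1 + 1 by ring, show m + (j + 1) = m + j + 1 by ring,
      show m + 1 + j = m + j + 1 by ring, show m + 2 + j = m + j + 1 + 1 by ring,
      Nat.choose_succ_succ' n j, Nat.choose_succ_succ' n (m + j + 1)]
    push_cast
    rw [cast_choose_succ n j, cast_choose_succ n (m + j + 1)]
    push_cast
    field_simp
    ring

/-- The outer variable is `x`, the inner one is `t`; so `t` is `C X`. -/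
def seriesPow (m : ℕ) : ℚ⟦X⟧⟦X⟧ := mk fun n => mk (powCoeff m n)

theorem coeff_coeff_seriesPow (m n k : ℕ) : coeff k (coeff n (seriesPow m)) = powCoeff m n k := by
  simp [seriesPow]

theorem seriesPow_zero : seriesPow 0 = 1 := by
  ext n k
  rcases Nat.eq_zero_or_pos n with rfl | hn
  · simp [seriesPow, powCoeff, coeff_one]
  · simp [seriesPow, powCoeff, coeff_one, hn.ne']

theorem seriesPow_succ (m : ℕ) :
    seriesPow (m + 1)
      = X * (seriesPow m + C (1 + X) * seriesPow (m + 1) + C X * seriesPow (m + 2)) := by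
  ext n k
  rcases n with _ | n
  · simp [seriesPow, powCoeff]
  · rcases k with _ | j
    · simp [seriesPow, coeff_succ_X_mul, add_mul, powCoeff_succ_succ_zero]
    · simp [seriesPow, coeff_succ_X_mul, add_mul, powCoeff_succ_succ_succ, add_assoc]

theorem seriesPow_add (a b : ℕ) : seriesPow (a + b) = seriesPow a * seriesPow b := by
  suffices ∀ n a b, coeff n (seriesPow a * seriesPow b) = coeff n (seriesPow (a + b)) from
    ext fun n => (this n a b).symm
  intro n
  induction n with
  | zero =>
    rintro a (_ | b)
    · simp [seriesPow_zero]
    · rw [seriesPow_succ b, ← add_assoc, seriesPow_succ (a + b), mul_left_comm]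
      simp
  | succ n ih =>
    rintro a (_ | b)
    · simp [seriesPow_zero]
    · rw [seriesPow_succ b, ← add_assoc, seriesPow_succ (a + b), mul_left_comm,
        coeff_succ_X_mul, coeff_succ_X_mul]
      have distrib :
          seriesPow a * (seriesPow b + C (1 + X) * seriesPow (b + 1) + C X * seriesPow (b + 2))
            = seriesPow a * seriesPow b + C (1 + X) * (seriesPow a * seriesPow (b + 1))
              + C X * (seriesPow a * seriesPow (b + 2)) := by ring
      rw [distrib]
      simp only [map_add (coeff n), coeff_C_mul, ih, add_assoc]

theorem coeff_coeff_seriesPow_mul (a b n k : ℕ) :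
    coeff k (coeff n (seriesPow a * seriesPow b)) = ∑ i ∈ Finset.range (n + 1),
      ∑ l ∈ Finset.range (k + 1), powCoeff a i l * powCoeff b (n - i) (k - l) := by
  simp [coeff_mul, coeff_coeff_seriesPow, Finset.Nat.sum_antidiagonal_eq_sum_range_succ_mk]

theorem seriesPow_one_eq :
    seriesPow 1 = X * (1 + C (1 + X) * seriesPow 1 + C X * (seriesPow 1 * seriesPow 1)) := by
  rw [← seriesPow_add, ← seriesPow_zero]
  exact seriesPow_succ 0

theorem sum_range_succ_eq_sum_Icc {M : Type*} [AddCommMonoid M] (f : ℕ → M) (n : ℕ)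
    (h₀ : f 0 = 0) (hₙ : f n = 0) :
    ∑ i ∈ Finset.range (n + 1), f i = ∑ i ∈ Finset.Icc 1 (n - 1), f i := by
  symm
  apply Finset.sum_subset
  · intro i hi
    simp only [Finset.mem_Icc, Finset.mem_range] at hi ⊢
    omega
  · intro i hi hi'
    simp only [Finset.mem_Icc, Finset.mem_range] at hi hi'
    obtain rfl | rfl : i = 0 ∨ i = n := by omega
    exacts [h₀, hₙ]

theorem powCoeff_one_succ (n k : ℕ) (hn : n ≠ 0) :
    powCoeff 1 (n + 1) k = powCoeff 1 n k + (if k = 0 then 0 else powCoeff 1 n (k - 1)) +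
      ∑ n₁ ∈ Finset.Icc 1 (n - 1), ∑ k₁ ∈ Finset.range k,
        powCoeff 1 n₁ k₁ * powCoeff 1 (n - n₁) (k - 1 - k₁) := by
  have h := congrArg (fun f => coeff k (coeff (n + 1) f)) seriesPow_one_eq
  rw [← sum_range_succ_eq_sum_Icc _ _ (by simp [powCoeff]) (by simp [powCoeff])]
  rcases k with _ | j
  · simpa [seriesPow, coeff_succ_X_mul, coeff_one, hn, add_mul] using h
  · simpa [coeff_coeff_seriesPow, coeff_succ_X_mul, coeff_one, hn, add_mul,
      coeff_coeff_seriesPow_mul] using h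

theorem succ_dvd_choose_mul_choose (n k : ℕ) :
    n + 1 ∣ (n + 1).choose (k + 1) * (n + 1).choose k := by
  have h₁ : n + 1 ∣ (k + 1) * ((n + 1).choose (k + 1) * (n + 1).choose k) :=
    ⟨n.choose k * (n + 1).choose k, by
      rw [← mul_assoc, mul_comm (k + 1), ← Nat.add_one_mul_choose_eq]; ring⟩
  have h₂ : n + 1 ∣ k * ((n + 1).choose (k + 1) * (n + 1).choose k) := by
    rcases k with _ | k
    · simp
    · exact ⟨n.choose k * (n + 1).choose (k + 2), by
        rw [mul_left_comm, mul_comm (k + 1), ← Nat.add_one_mul_choose_eq]; ring⟩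
  simpa [← Nat.sub_mul] using Nat.dvd_sub h₁ h₂

theorem cast_narayanaC (n k : ℕ) : (narayanaC n k : ℚ) = powCoeff 1 n k := by
  rcases n with _ | n
  · simp [narayanaC, powCoeff]
  · rw [narayanaC, Nat.cast_div (succ_dvd_choose_mul_choose n k) (by positivity)]
    simp [powCoeff, add_comm 1 k, mul_comm]

end Narayana

/-- The Narayana recursion
`C_{n+1,k} = C_{n,k} + C_{n,k-1} + Σ_{n₁+n₂=n, k₁+k₂=k-1, nᵢ≥1} C_{n₁,k₁}·C_{n₂,k₂}`,
with the `C_{n,k-1}` term absent when `k = 0`. -/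
theorem stmt8 (n k : ℕ) (hn : 1 ≤ n) :
    narayanaC (n+1) k
      = narayanaC n k + (if k = 0 then 0 else narayanaC n (k-1)) +
        ∑ n₁ ∈ Finset.Icc 1 (n-1), ∑ k₁ ∈ Finset.range k,
          narayanaC n₁ k₁ * narayanaC (n - n₁) (k - 1 - k₁) := by
  have h := Narayana.powCoeff_one_succ n k (by omega)
  simp only [← Narayana.cast_narayanaC] at h
  exact_mod_cast h
end

section
/- For any n ≥ 1 and k with 0 ≤ k ≤ n-1, the number of chord diagrams of n chords with relative euler class e = 2k-(n-1) equals the shifted Narayana number N(n, k+1) = (1/n)·C(n,k+1)·C(n,k). -/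
/-- A chord diagram with `n` chords, encoded as a fixed-point-free involution
of the `2n` marked points `0, …, 2n-1` (normalized to be the identity
elsewhere). -/
def IsMatching (n : ℕ) (f : ℕ → ℕ) : Prop :=
  (∀ i, i < 2*n → f i < 2*n) ∧ (∀ i, i < 2*n → f (f i) = i) ∧
  (∀ i, i < 2*n → f i ≠ i) ∧ (∀ i, ¬ i < 2*n → f i = i)

/-- The matching is noncrossing: there are no chords `{a, f a}`, `{b, f b}`
with `a < b < f a < f b`. -/
def Noncrossing (n : ℕ) (f : ℕ → ℕ) : Prop :=
  ∀ a b, a < 2*n → b < 2*n → ¬ (a < b ∧ b < f a ∧ f a < f b)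

/-- A chord diagram of `n` chords: a noncrossing perfect matching of the `2n`
marked points, with base point `0`. -/
def IsCD (n : ℕ) (f : ℕ → ℕ) : Prop := IsMatching n f ∧ Noncrossing n f


/-- The relative euler class of a chord diagram: the signed count of regions.
Each chord `{a, f a}` with `a < f a` contributes the sign of the region just
inside it (+1 if `a` is even, -1 if odd), and the outer region (adjacent to
the arc just anticlockwise of the base point) contributes `-1`. -/
def eulerClass (n : ℕ) (f : ℕ → ℕ) : ℤ :=
  -1 + ∑ i ∈ Finset.range (2*n),
    (if i < f i then (if Even i then (1 : ℤ) else -1) else 0)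

/-!
Recording the opening points of its chords turns a chord diagram into the set of up-steps of a
Dyck path of length `2n`: the chord opened at `j` closes just before the first return of the path
to its height at `j`. Under this bijection the relative euler class becomes `2p - n - 1`, where
`p` counts the up-steps at even positions. After the first step, grouping the steps in pairs
gives a two-coloured Motzkin path, so the number of ballot walks of length `2r + 1` ending at height
`2H + 1` with `p` even up-steps satisfies a four-term Pascal recursion in `r`, as does the
determinant `C(r, p-1) C(r, p-H-1) - C(r, p) C(r, p-H-2)`. At `r = n - 1`, `H = 0`, `p = k + 1`
the determinant is the Narayana number `C(n, k+1) C(n, k) / n`.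
-/

open Finset

lemma exists_eq_of_le_of_le {g : ℕ → ℤ} (hg : ∀ t, |g (t + 1) - g t| ≤ 1)
    {a b : ℕ} {v : ℤ} (hab : a ≤ b) (ha : g a ≤ v) (hb : v ≤ g b) :
    ∃ j, a ≤ j ∧ j ≤ b ∧ g j = v := by
  induction b, hab using Nat.le_induction with
  | base => exact ⟨a, le_rfl, le_rfl, le_antisymm ha hb⟩
  | succ b hab ih =>
    by_cases hvb : v ≤ g b
    · obtain ⟨j, haj, hjb, hj⟩ := ih hvb
      exact ⟨j, haj, hjb.trans b.le_succ, hj⟩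
    · have := abs_le.1 (hg b)
      exact ⟨b + 1, by omega, le_rfl, by omega⟩

lemma exists_eq_of_ge_of_ge {g : ℕ → ℤ} (hg : ∀ t, |g (t + 1) - g t| ≤ 1)
    {a b : ℕ} {v : ℤ} (hab : a ≤ b) (ha : v ≤ g a) (hb : g b ≤ v) :
    ∃ j, a ≤ j ∧ j ≤ b ∧ g j = v := by
  have hg' : ∀ t, |-g (t + 1) - -g t| ≤ 1 := fun t => by
    rw [neg_sub_neg, abs_sub_comm]; exact hg t
  obtain ⟨j, haj, hjb, hj⟩ :=
    exists_eq_of_le_of_le (g := fun t => -g t) hg' hab (neg_le_neg ha) (neg_le_neg hb)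
  exact ⟨j, haj, hjb, neg_inj.1 hj⟩

def intChoose (r : ℕ) (k : ℤ) : ℤ := if 0 ≤ k then (r.choose k.toNat : ℤ) else 0

lemma intChoose_of_neg {r : ℕ} {k : ℤ} (hk : k < 0) : intChoose r k = 0 := by
  simp [intChoose, hk.not_ge]

@[simp] lemma intChoose_natCast (r k : ℕ) : intChoose r k = r.choose k := by
  simp [intChoose]

lemma intChoose_zero_left (k : ℤ) : intChoose 0 k = if k = 0 then 1 else 0 := by
  rcases lt_or_ge k 0 with hk | hk
  · rw [intChoose_of_neg hk, if_neg hk.ne]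
  · lift k to ℕ using hk
    rcases k with _ | j
    · simp [intChoose]
    · rw [intChoose_natCast, Nat.choose_zero_succ, if_neg (by omega)]
      rfl

lemma intChoose_succ (r : ℕ) (k : ℤ) :
    intChoose (r + 1) k = intChoose r k + intChoose r (k - 1) := by
  rcases lt_or_ge k 0 with hk | hk
  · simp [intChoose_of_neg hk, intChoose_of_neg (show k - 1 < 0 by omega)]
  · lift k to ℕ using hk
    rcases k with _ | j
    · simp [intChoose]
    · rw [Nat.cast_succ, add_sub_cancel_right, ← Nat.cast_succ]
      simp only [intChoose_natCast]
      exact_mod_cast (Nat.choose_succ_succ' r j).trans (add_comm _ _)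

/-- The number of ballot walks of length `2r + 1` ending at height `2H + 1` with `p` up-steps at
even positions (`card_ballotSets_odd`). -/
def binomDet (r : ℕ) (H p : ℤ) : ℤ :=
  intChoose r (p - 1) * intChoose r (p - H - 1) - intChoose r p * intChoose r (p - H - 2)

lemma binomDet_neg_one_left (r : ℕ) (p : ℤ) : binomDet r (-1) p = 0 := by
  simp only [binomDet, sub_neg_eq_add, add_sub_cancel_right, show p + 1 - 2 = p - 1 by ring]
  ring

lemma binomDet_succ (r : ℕ) (H p : ℤ) :
    binomDet (r + 1) H p =
      binomDet r (H - 1) (p - 1) + binomDet r H (p - 1) + binomDet r H p +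
        binomDet r (H + 1) p := by
  simp only [binomDet, intChoose_succ]
  ring_nf

lemma natCast_mul_binomDet (m k : ℕ) (hk : k ≤ m) :
    ((m + 1 : ℕ) : ℤ) * binomDet m 0 (k + 1) = (m + 1).choose (k + 1) * (m + 1).choose k := by
  have hx₁ := Nat.add_one_mul_choose_eq m k
  have hx₂ := Nat.choose_mul_succ_eq m k
  have hy := Nat.choose_mul_succ_eq m (k + 1)
  have hz : ((m : ℤ) + 1) * intChoose m (k - 1) = (m + 1).choose k * (k : ℤ) := by
    rcases k with _ | j
    · simp [intChoose_of_neg]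
    · rw [Nat.cast_succ, add_sub_cancel_right, intChoose_natCast]
      exact_mod_cast Nat.add_one_mul_choose_eq m j
  simp only [binomDet, sub_zero, add_sub_cancel_right, show (k : ℤ) + 1 - 2 = k - 1 by ring]
  rw [← Nat.cast_succ, intChoose_natCast, intChoose_natCast]
  have hn : ((m : ℤ) + 1) ≠ 0 := by positivity
  apply mul_left_cancel₀ hn
  zify [show k ≤ m + 1 by omega, show k + 1 ≤ m + 1 by omega] at hx₁ hx₂ hy ⊢
  linear_combination ((m + 1 : ℤ) * m.choose k) * hx₂
    + ((m + 1 : ℕ).choose k * ((m : ℤ) + 1 - k)) * hx₁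
    - ((m + 1 : ℤ) * m.choose (k + 1)) * hz - ((m + 1).choose k * (k : ℤ)) * hy

def height (O : Finset ℕ) (t : ℕ) : ℤ := ∑ i ∈ range t, if i ∈ O then 1 else -1

@[simp] lemma height_zero (O : Finset ℕ) : height O 0 = 0 := by simp [height]

lemma height_succ (O : Finset ℕ) (t : ℕ) :
    height O (t + 1) = height O t + if t ∈ O then 1 else -1 :=
  sum_range_succ _ _

lemma height_succ_of_mem {O : Finset ℕ} {t : ℕ} (ht : t ∈ O) :
    height O (t + 1) = height O t + 1 := by
  rw [height_succ, if_pos ht]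

lemma height_succ_of_notMem {O : Finset ℕ} {t : ℕ} (ht : t ∉ O) :
    height O (t + 1) = height O t - 1 := by
  rw [height_succ, if_neg ht, sub_eq_add_neg]

lemma abs_height_succ_sub_le (O : Finset ℕ) (t : ℕ) :
    |height O (t + 1) - height O t| ≤ 1 := by
  rw [height_succ]
  split_ifs <;> simp

lemma height_congr {O O' : Finset ℕ} {t : ℕ} (h : ∀ i < t, i ∈ O ↔ i ∈ O') :
    height O t = height O' t :=
  sum_congr rfl fun i hi => by simp only [h i (mem_range.1 hi)]

lemma height_of_subset {O : Finset ℕ} {l : ℕ} (hO : O ⊆ range l) :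
    height O l = 2 * #O - l := by
  have hsplit := card_filter_add_card_filter_not (s := range l) (· ∈ O)
  rw [filter_mem_eq_inter, inter_eq_right.2 hO, card_range] at hsplit
  rw [height, sum_ite, sum_const, sum_const, filter_mem_eq_inter, inter_eq_right.2 hO]
  simp only [nsmul_eq_mul, mul_one, mul_neg]
  omega

/-- `O ⊆ {0, …, l-1}` is the set of up-steps of a walk of length `l` with down-steps elsewhere;
the walk must stay weakly above `0` and end at height `h`. -/
def IsBallotSet (l : ℕ) (h : ℤ) (O : Finset ℕ) : Prop :=
  O ⊆ range l ∧ (∀ t ≤ l, 0 ≤ height O t) ∧ height O l = h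

instance (l : ℕ) (h : ℤ) : DecidablePred (IsBallotSet l h) := fun _ => by
  unfold IsBallotSet; infer_instance

def ballotSets (l : ℕ) (h p : ℤ) : Finset (Finset ℕ) :=
  (range l).powerset.filter fun O => IsBallotSet l h O ∧ (#(O.filter Even) : ℤ) = p

lemma mem_ballotSets {l : ℕ} {h p : ℤ} {O : Finset ℕ} :
    O ∈ ballotSets l h p ↔ IsBallotSet l h O ∧ (#(O.filter Even) : ℤ) = p := by
  simp only [ballotSets, mem_filter, mem_powerset, and_iff_right_iff_imp]
  exact fun hO => hO.1.1

lemma ballotSets_of_neg {l : ℕ} {h : ℤ} (hh : h < 0) (p : ℤ) : ballotSets l h p = ∅ := by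
  ext O
  simp only [mem_ballotSets, IsBallotSet, notMem_empty, iff_false]
  rintro ⟨⟨-, hpos, rfl⟩, -⟩
  exact hh.not_ge (hpos l le_rfl)

lemma card_ballotSets_zero (h p : ℤ) :
    (#(ballotSets 0 h p) : ℤ) = if h = 0 ∧ p = 0 then 1 else 0 := by
  rw [ballotSets, range_zero, powerset_empty, filter_singleton]
  by_cases hhp : h = 0 ∧ p = 0
  · simp [IsBallotSet, hhp]
  · simp [IsBallotSet, hhp, eq_comm]

lemma isBallotSet_succ_iff {l : ℕ} {h : ℤ} {O : Finset ℕ} (hh : 0 ≤ h) :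
    IsBallotSet (l + 1) h O ↔ IsBallotSet l (h - if l ∈ O then 1 else -1) (O.erase l) := by
  have hcongr : ∀ t ≤ l, height (O.erase l) t = height O t := fun t ht =>
    height_congr fun i hi => by simp [mem_erase, (hi.trans_le ht).ne]
  have hsub : O.erase l ⊆ range l ↔ O ⊆ range (l + 1) := by
    rw [range_add_one, subset_insert_iff]
  unfold IsBallotSet
  rw [hsub, hcongr l le_rfl, height_succ]
  constructor
  · rintro ⟨hO, hpos, rfl⟩
    exact ⟨hO, fun t ht => hcongr t ht ▸ hpos t (by omega), by ring⟩
  · rintro ⟨hO, hpos, hl⟩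
    refine ⟨hO, fun t ht => ?_, by rw [hl]; ring⟩
    rcases Nat.lt_or_ge t (l + 1) with htl | htl
    · exact hcongr t (by omega) ▸ hpos t (by omega)
    · rw [show t = l + 1 by omega, height_succ, hl]
      linarith

lemma card_filter_even_insert {O : Finset ℕ} {l : ℕ} (hl : l ∉ O) :
    (#((insert l O).filter Even) : ℤ) = #(O.filter Even) + if Even l then 1 else 0 := by
  rw [filter_insert]
  split_ifs with he
  · rw [card_insert_of_notMem (fun h => hl (mem_filter.1 h).1)]
    push_cast; ring
  · simp

lemma filter_notMem_ballotSets {l : ℕ} {h : ℤ} (hh : 0 ≤ h) (p : ℤ) :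
    (ballotSets (l + 1) h p).filter (l ∉ ·) = ballotSets l (h + 1) p := by
  ext O
  rw [mem_filter, mem_ballotSets, mem_ballotSets, isBallotSet_succ_iff hh]
  constructor
  · rintro ⟨⟨hO, hp⟩, hl⟩
    rw [if_neg hl, erase_eq_of_notMem hl, sub_neg_eq_add] at hO
    exact ⟨hO, hp⟩
  · rintro ⟨hO, hp⟩
    have hl : l ∉ O := fun hl => by simpa using hO.1 hl
    rw [if_neg hl, erase_eq_of_notMem hl, sub_neg_eq_add]
    exact ⟨⟨hO, hp⟩, hl⟩

lemma card_filter_mem_ballotSets {l : ℕ} {h : ℤ} (hh : 0 ≤ h) (p : ℤ) :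
    #((ballotSets (l + 1) h p).filter (l ∈ ·)) =
      #(ballotSets l (h - 1) (p - if Even l then 1 else 0)) := by
  refine card_nbij' (·.erase l) (insert l) (fun O hO => ?_) (fun O hO => ?_)
    (fun O hO => insert_erase (mem_filter.1 hO).2) (fun O hO => ?_)
  · obtain ⟨hO, hl⟩ := mem_filter.1 hO
    simp only [mem_coe]
    rw [mem_ballotSets, isBallotSet_succ_iff hh, if_pos hl] at hO
    rw [mem_ballotSets, ← hO.2, ← insert_erase hl,
      card_filter_even_insert (notMem_erase l O), erase_insert (notMem_erase l O)]
    exact ⟨hO.1, by ring⟩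
  · rw [mem_coe, mem_ballotSets] at hO
    have hl : l ∉ O := fun hl => by simpa using hO.1.1 hl
    simp only [mem_coe]
    rw [mem_filter, mem_ballotSets, isBallotSet_succ_iff hh, if_pos (mem_insert_self l O),
      erase_insert hl, card_filter_even_insert hl, hO.2]
    exact ⟨⟨hO.1, by ring⟩, mem_insert_self l O⟩
  · rw [mem_coe, mem_ballotSets] at hO
    exact erase_insert fun hl => by simpa using hO.1.1 hl

lemma card_ballotSets_succ {l : ℕ} {h : ℤ} (hh : 0 ≤ h) (p : ℤ) :
    (#(ballotSets (l + 1) h p) : ℤ) =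
      #(ballotSets l (h - 1) (p - if Even l then 1 else 0)) + #(ballotSets l (h + 1) p) := by
  rw [← card_filter_add_card_filter_not (l ∈ ·), card_filter_mem_ballotSets hh,
    filter_notMem_ballotSets hh]
  push_cast; rfl

theorem card_ballotSets_odd (r : ℕ) {H : ℤ} (hH : -1 ≤ H) (p : ℤ) :
    (#(ballotSets (2 * r + 1) (2 * H + 1) p) : ℤ) = binomDet r H p := by
  induction r generalizing H p with
  | zero =>
    rcases hH.eq_or_lt with rfl | hH
    · rw [ballotSets_of_neg (by norm_num), binomDet_neg_one_left, card_empty, Nat.cast_zero]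
    rw [card_ballotSets_succ (by omega), card_ballotSets_zero, card_ballotSets_zero, binomDet,
      intChoose_zero_left, intChoose_zero_left, intChoose_zero_left, intChoose_zero_left]
    simp only [Nat.mul_zero, Even.zero, if_true]
    split_ifs <;> omega
  | succ r ih =>
    rcases hH.eq_or_lt with rfl | hH
    · rw [ballotSets_of_neg (by norm_num), binomDet_neg_one_left, card_empty, Nat.cast_zero]
    have heven : Even (2 * r + 2) := ⟨r + 1, by ring⟩
    have hodd : ¬ Even (2 * r + 1) := by simp
    -- the step at the even position `2r + 2`, then the one at the odd position `2r + 1`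
    have e₁ : (#(ballotSets (2 * (r + 1) + 1) (2 * H + 1) p) : ℤ) =
        #(ballotSets (2 * r + 2) (2 * H) (p - 1)) + #(ballotSets (2 * r + 2) (2 * H + 2) p) := by
      rw [show 2 * (r + 1) + 1 = 2 * r + 2 + 1 by ring, card_ballotSets_succ (by omega),
        if_pos heven]
      ring_nf
    have e₂ : (#(ballotSets (2 * r + 2) (2 * H) (p - 1)) : ℤ) =
        #(ballotSets (2 * r + 1) (2 * (H - 1) + 1) (p - 1)) +
          #(ballotSets (2 * r + 1) (2 * H + 1) (p - 1)) := by
      rw [card_ballotSets_succ (by omega), if_neg hodd]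
      ring_nf
    have e₃ : (#(ballotSets (2 * r + 2) (2 * H + 2) p) : ℤ) =
        #(ballotSets (2 * r + 1) (2 * H + 1) p) +
          #(ballotSets (2 * r + 1) (2 * (H + 1) + 1) p) := by
      rw [card_ballotSets_succ (by omega), if_neg hodd]
      ring_nf
    rw [e₁, e₂, e₃, ih (by omega), ih (by omega), ih (by omega), ih (by omega), binomDet_succ,
      add_assoc _ (binomDet r H p)]

theorem card_ballotSets_balanced (m : ℕ) (p : ℤ) :
    (#(ballotSets (2 * (m + 1)) 0 p) : ℤ) = binomDet m 0 p := by
  rw [show 2 * (m + 1) = 2 * m + 1 + 1 by ring, card_ballotSets_succ le_rfl,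
    ballotSets_of_neg (by norm_num), card_empty, Nat.cast_zero, zero_add,
    ← card_ballotSets_odd m (by norm_num) p]
  norm_num

/-- `closer O j + 1` is the first time after `j` at which the walk returns to its height at time
`j`; for an up-step `j` this is the closing point of the chord opened at `j`. -/
noncomputable def closer (O : Finset ℕ) (j : ℕ) : ℕ :=
  sInf {c | j < c ∧ height O (c + 1) = height O j}

/-- The last time up to `i` at which the walk is at its height at time `i + 1`; for a down-step
`i` this is the opening point of the chord closed at `i`. -/
def opener (O : Finset ℕ) (i : ℕ) : ℕ :=
  Nat.findGreatest (fun j => height O j = height O (i + 1)) i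

lemma closer_eq_of {O : Finset ℕ} {j c : ℕ} (hjc : j < c) (hc : height O (c + 1) = height O j)
    (hpos : ∀ t, j < t → t ≤ c → height O j < height O t) : closer O j = c := by
  have hmem : c ∈ {c | j < c ∧ height O (c + 1) = height O j} := ⟨hjc, hc⟩
  unfold closer
  refine le_antisymm (Nat.sInf_le hmem) (not_lt.1 fun hlt => ?_)
  obtain ⟨hj, heq⟩ := Nat.sInf_mem ⟨c, hmem⟩
  exact (hpos _ (by omega) hlt).ne' heq

lemma opener_eq_of {O : Finset ℕ} {i j : ℕ} (hji : j ≤ i) (hj : height O j = height O (i + 1))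
    (hne : ∀ t, j < t → t ≤ i → height O t ≠ height O (i + 1)) : opener O i = j :=
  Nat.findGreatest_eq_iff.2 ⟨hji, fun _ => hj, fun t ht hti => hne t ht hti⟩

def openers (n : ℕ) (f : ℕ → ℕ) : Finset ℕ := (range (2 * n)).filter fun i => i < f i

noncomputable def matchingOf (n : ℕ) (O : Finset ℕ) (i : ℕ) : ℕ :=
  if i < 2 * n then (if i ∈ O then closer O i else opener O i) else i

lemma matchingOf_of_notMem {n i : ℕ} {O : Finset ℕ} (hi : i < 2 * n) (hio : i ∉ O) :
    matchingOf n O i = opener O i := by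
  rw [matchingOf, if_pos hi, if_neg hio]

section BallotSet

variable {n : ℕ} {O : Finset ℕ} (hO : IsBallotSet (2 * n) 0 O)
include hO

lemma IsBallotSet.lt_of_mem {j : ℕ} (hj : j ∈ O) : j < 2 * n := by
  simpa using hO.1 hj

lemma IsBallotSet.card_eq : #O = n := by
  have := hO.2.2
  rw [height_of_subset hO.1] at this
  omega

lemma IsBallotSet.closer_spec {j : ℕ} (hj : j ∈ O) :
    j < closer O j ∧ closer O j < 2 * n ∧ height O (closer O j + 1) = height O j ∧
      ∀ t, j < t → t ≤ closer O j → height O j < height O t := by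
  have hjn := hO.lt_of_mem hj
  have hup := height_succ_of_mem hj
  set S := {c | j < c ∧ height O (c + 1) = height O j}
  rw [show closer O j = sInf S from rfl]
  have hS : ∀ u, j + 1 ≤ u → height O u = height O j → u - 1 ∈ S := fun u hu heq => by
    rcases hu.eq_or_lt with rfl | hu
    · omega
    · exact ⟨by omega, by rwa [Nat.sub_add_cancel (by omega)]⟩
  obtain ⟨s, hs, hsn, hsj⟩ := exists_eq_of_ge_of_ge (abs_height_succ_sub_le O)
    (show j + 1 ≤ 2 * n by omega) (show height O j ≤ height O (j + 1) by omega)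
    (hO.2.2.symm ▸ hO.2.1 j (by omega))
  obtain ⟨hj₀, hc₀⟩ := Nat.sInf_mem ⟨_, hS s hs hsj⟩
  refine ⟨hj₀, (Nat.sInf_le (hS s hs hsj)).trans_lt (by omega), hc₀, fun t hjt htc => ?_⟩
  by_contra! hle
  obtain ⟨u, hju, hut, hu⟩ := exists_eq_of_ge_of_ge (abs_height_succ_sub_le O)
    (show j + 1 ≤ t by omega) (show height O j ≤ height O (j + 1) by omega) hle
  exact Nat.notMem_of_lt_sInf (by omega) (hS u hju hu)

lemma IsBallotSet.opener_spec {i : ℕ} (hi : i < 2 * n) (hio : i ∉ O) :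
    opener O i ∈ O ∧ opener O i < i ∧ closer O (opener O i) = i := by
  have hdown := height_succ_of_notMem hio
  set w := height O (i + 1)
  have hw : 0 ≤ w := hO.2.1 (i + 1) hi
  obtain ⟨j₀, -, hj₀i, hj₀⟩ :=
    exists_eq_of_le_of_le (abs_height_succ_sub_le O) (Nat.zero_le i)
    (by rw [height_zero]; exact hw) (show w ≤ height O i by omega)
  have hspec : height O (opener O i) = w :=
    Nat.findGreatest_spec (P := fun j => height O j = w) hj₀i hj₀
  have hlast : ∀ t, opener O i < t → t ≤ i → height O t ≠ w := fun t ht hti =>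
    Nat.findGreatest_is_greatest ht hti
  have hlt : opener O i < i := lt_of_le_of_ne (Nat.findGreatest_le i) fun h => by
    rw [h] at hspec; omega
  have habove : ∀ t, opener O i < t → t ≤ i → w < height O t := fun t ht hti => by
    by_contra! hle
    obtain ⟨u, htu, hui, hu⟩ := exists_eq_of_le_of_le (abs_height_succ_sub_le O) hti hle
      (show w ≤ height O i by omega)
    exact hlast u (by omega) hui hu
  have hmem : opener O i ∈ O := by
    by_contra hno
    have := habove _ (Nat.lt_succ_self _) hlt
    rw [height_succ_of_notMem hno] at this
    omega
  exact ⟨hmem, hlt, closer_eq_of hlt hspec.symm fun t ht hti => hspec ▸ habove t ht hti⟩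

lemma IsBallotSet.opener_closer {j : ℕ} (hj : j ∈ O) : opener O (closer O j) = j := by
  obtain ⟨hjc, -, hret, hpos⟩ := hO.closer_spec hj
  exact opener_eq_of hjc.le hret.symm fun t ht htc => by rw [hret]; exact (hpos t ht htc).ne'

lemma IsBallotSet.matchingOf_of_mem {j : ℕ} (hj : j ∈ O) : matchingOf n O j = closer O j := by
  rw [matchingOf, if_pos (hO.lt_of_mem hj), if_pos hj]

lemma IsBallotSet.isMatching_matchingOf : IsMatching n (matchingOf n O) := by
  refine ⟨fun i hi => ?_, fun i hi => ?_, fun i hi => ?_, fun i hi => if_neg hi⟩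
  · by_cases hio : i ∈ O
    · rw [hO.matchingOf_of_mem hio]; exact (hO.closer_spec hio).2.1
    · rw [matchingOf_of_notMem hi hio]; exact (hO.opener_spec hi hio).2.1.trans hi
  · by_cases hio : i ∈ O
    · have hc := hO.closer_spec hio
      have hcO : closer O i ∉ O := fun hcO => by
        have := hc.2.2.2 _ hc.1 le_rfl
        rw [← hc.2.2.1, height_succ_of_mem hcO] at this
        omega
      rw [hO.matchingOf_of_mem hio, matchingOf_of_notMem hc.2.1 hcO, hO.opener_closer hio]
    · obtain ⟨hm, -, hc⟩ := hO.opener_spec hi hio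
      rw [matchingOf_of_notMem hi hio, hO.matchingOf_of_mem hm, hc]
  · by_cases hio : i ∈ O
    · rw [hO.matchingOf_of_mem hio]; exact (hO.closer_spec hio).1.ne'
    · rw [matchingOf_of_notMem hi hio]; exact (hO.opener_spec hi hio).2.1.ne

lemma IsBallotSet.noncrossing_matchingOf : Noncrossing n (matchingOf n O) := by
  rintro a b ha hb ⟨hab, hbfa, hfafb⟩
  have haO : a ∈ O := by
    by_contra haO
    have := (hO.opener_spec ha haO).2.1
    rw [matchingOf_of_notMem ha haO] at hbfa
    omega
  rw [hO.matchingOf_of_mem haO] at hbfa hfafb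
  have hbO : b ∈ O := by
    by_contra hbO
    have := (hO.opener_spec hb hbO).2.1
    rw [matchingOf_of_notMem hb hbO] at hfafb
    omega
  rw [hO.matchingOf_of_mem hbO] at hfafb
  obtain ⟨-, -, hreta, hposa⟩ := hO.closer_spec haO
  obtain ⟨-, -, -, hposb⟩ := hO.closer_spec hbO
  have hba := hposa b hab hbfa.le
  obtain ⟨s, hbs, hsa, hs⟩ := exists_eq_of_ge_of_ge (abs_height_succ_sub_le O) (v := height O b)
    (show b + 1 ≤ closer O a + 1 by omega) (by linarith [height_succ_of_mem hbO]) (by omega)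
  have hsb : closer O b < s := by
    by_contra! hsb
    exact (hposb s (by omega) hsb).ne' hs
  omega

lemma IsBallotSet.openers_matchingOf : openers n (matchingOf n O) = O := by
  ext i
  simp only [openers, mem_filter, mem_range]
  constructor
  · rintro ⟨hi, hlt⟩
    by_contra hio
    rw [matchingOf_of_notMem hi hio] at hlt
    exact (hO.opener_spec hi hio).2.1.not_gt hlt
  · intro hi
    rw [hO.matchingOf_of_mem hi]
    exact ⟨hO.lt_of_mem hi, (hO.closer_spec hi).1⟩

end BallotSet

section Matching

variable {n : ℕ} {f : ℕ → ℕ}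

lemma IsMatching.apply_lt (hf : IsMatching n f) {i : ℕ} (hi : i < 2 * n) : f i < 2 * n :=
  hf.1 i hi

lemma IsMatching.apply_apply (hf : IsMatching n f) {i : ℕ} (hi : i < 2 * n) : f (f i) = i :=
  hf.2.1 i hi

lemma IsMatching.apply_ne (hf : IsMatching n f) {i : ℕ} (hi : i < 2 * n) : f i ≠ i :=
  hf.2.2.1 i hi

lemma IsMatching.sum_sign_eq_zero (hf : IsMatching n f) {s : Finset ℕ} (hs : s ⊆ range (2 * n))
    (hmaps : ∀ i ∈ s, f i ∈ s) : ∑ i ∈ s, (if i < f i then (1 : ℤ) else -1) = 0 := by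
  have hlt : ∀ i ∈ s, i < 2 * n := fun i hi => mem_range.1 (hs hi)
  refine sum_involution (fun i _ => f i) (fun i hi => ?_) (fun i hi _ => hf.apply_ne (hlt i hi))
    hmaps (fun i hi => hf.apply_apply (hlt i hi))
  have hne := hf.apply_ne (hlt i hi)
  rw [hf.apply_apply (hlt i hi)]
  rcases hne.lt_or_gt with h | h
  · rw [if_neg h.not_gt, if_pos h]; norm_num
  · rw [if_pos h, if_neg h.not_gt]; norm_num

lemma IsMatching.sum_sign_nonneg (hf : IsMatching n f) {s : Finset ℕ} (hs : s ⊆ range (2 * n))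
    (hmaps : ∀ i ∈ s, f i < i → f i ∈ s) :
    0 ≤ ∑ i ∈ s, (if i < f i then (1 : ℤ) else -1) := by
  have hlt : ∀ i ∈ s, i < 2 * n := fun i hi => mem_range.1 (hs hi)
  have hcard : #(s.filter fun i => ¬ i < f i) ≤ #(s.filter fun i => i < f i) := by
    refine card_le_card_of_injOn f (fun i hi => ?_) fun i hi j hj hij => ?_
    · obtain ⟨his, hi⟩ := mem_filter.1 hi
      have hfi : f i < i := lt_of_le_of_ne (not_lt.1 hi) (hf.apply_ne (hlt i his))
      exact mem_filter.2 ⟨hmaps i his hfi, by rwa [hf.apply_apply (hlt i his)]⟩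
    · rw [← hf.apply_apply (hlt i (mem_filter.1 hi).1), hij,
        hf.apply_apply (hlt j (mem_filter.1 hj).1)]
  rw [sum_ite, sum_const, sum_const]
  simp only [nsmul_eq_mul, mul_one, mul_neg]
  omega

lemma height_openers_sub {a b : ℕ} (hab : a ≤ b) (hb : b ≤ 2 * n) :
    height (openers n f) b - height (openers n f) a =
      ∑ i ∈ Ico a b, (if i < f i then (1 : ℤ) else -1) := by
  rw [height, height, ← sum_range_add_sum_Ico _ hab, add_sub_cancel_left]
  refine sum_congr rfl fun i hi => ?_
  have : i < 2 * n := (mem_Ico.1 hi).2.trans_le hb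
  simp [openers, this]

end Matching

section ChordDiagram

variable {n : ℕ} {f : ℕ → ℕ} (hf : IsCD n f)
include hf

lemma IsCD.isBallotSet_openers : IsBallotSet (2 * n) 0 (openers n f) := by
  have hheight (t : ℕ) (ht : t ≤ 2 * n) :
      height (openers n f) t = ∑ i ∈ range t, (if i < f i then (1 : ℤ) else -1) := by
    have := height_openers_sub (n := n) (f := f) (Nat.zero_le t) ht
    rwa [height_zero, sub_zero, ← range_eq_Ico] at this
  refine ⟨filter_subset _ _, fun t ht => ?_, ?_⟩
  · rw [hheight t ht]
    exact hf.1.sum_sign_nonneg (range_subset_range.2 ht) fun i hi hfi =>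
      mem_range.2 (hfi.trans (mem_range.1 hi))
  · rw [hheight _ le_rfl]
    exact hf.1.sum_sign_eq_zero subset_rfl fun i hi => mem_range.2 (hf.1.apply_lt (mem_range.1 hi))

lemma IsCD.apply_mem_Ioo {j i : ℕ} (hj : j < 2 * n) (hji : j < i) (hif : i < f j) :
    j < f i ∧ f i < f j := by
  have hfj := hf.1.apply_lt hj
  have hi : i < 2 * n := hif.trans hfj
  have hfi : f i ≠ j := fun h => by rw [← h, hf.1.apply_apply hi] at hif; exact hif.false
  have hfifj : f i ≠ f j := fun h => by
    rw [← hf.1.apply_apply hi, h, hf.1.apply_apply hj] at hji; exact hji.false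
  have h₁ : ¬ f i < j := fun h => hf.2 (f i) j (hf.1.apply_lt hi) hj
    ⟨h, by rwa [hf.1.apply_apply hi], by rwa [hf.1.apply_apply hi]⟩
  have h₂ : ¬ f j < f i := fun h => hf.2 j i hj hi ⟨hji, hif, h⟩
  omega

lemma IsCD.height_lt_height_openers {j t : ℕ} (hj : j < 2 * n) (hjf : j < f j) (hjt : j < t)
    (htf : t ≤ f j) : height (openers n f) j < height (openers n f) t := by
  have hfj := hf.1.apply_lt hj
  have hstep := height_succ_of_mem (show j ∈ openers n f by simp [openers, hj, hjf])
  have hsum := height_openers_sub (n := n) (f := f) (show j + 1 ≤ t by omega) (by omega)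
  have := hf.1.sum_sign_nonneg (s := Ico (j + 1) t)
    (fun i hi => mem_range.2 ((mem_Ico.1 hi).2.trans_le (by omega)))
    fun i hi hfi => by
      have hi := mem_Ico.1 hi
      have := hf.apply_mem_Ioo hj (show j < i by omega) (by omega)
      exact mem_Ico.2 ⟨by omega, by omega⟩
  omega

lemma IsCD.height_openers_apply_succ {j : ℕ} (hj : j < 2 * n) (hjf : j < f j) :
    height (openers n f) (f j + 1) = height (openers n f) j := by
  have hfj := hf.1.apply_lt hj
  have hstep := height_succ_of_mem (show j ∈ openers n f by simp [openers, hj, hjf])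
  have hstep' :=
    height_succ_of_notMem (show f j ∉ openers n f by simp [openers, hf.1.apply_apply hj, hjf.le])
  have hsum := height_openers_sub (n := n) (f := f) (show j + 1 ≤ f j by omega) hfj.le
  have := hf.1.sum_sign_eq_zero (s := Ico (j + 1) (f j))
    (fun i hi => mem_range.2 ((mem_Ico.1 hi).2.trans_le hfj.le))
    fun i hi => by
      have hi := mem_Ico.1 hi
      have := hf.apply_mem_Ioo hj (show j < i by omega) (by omega)
      exact mem_Ico.2 ⟨by omega, by omega⟩
  omega

lemma IsCD.matchingOf_openers : matchingOf n (openers n f) = f := by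
  have hO := hf.isBallotSet_openers
  have hcloser : ∀ j < 2 * n, j < f j → closer (openers n f) j = f j := fun j hj hjf =>
    closer_eq_of hjf (hf.height_openers_apply_succ hj hjf) fun t ht htf =>
      hf.height_lt_height_openers hj hjf ht htf
  funext i
  by_cases hi : i < 2 * n
  · by_cases hio : i ∈ openers n f
    · have hif : i < f i := (mem_filter.1 hio).2
      rw [hO.matchingOf_of_mem hio, hcloser i hi hif]
    · have hfi : f i < i := lt_of_le_of_ne (by simpa [openers, hi] using hio) (hf.1.apply_ne hi)
      have hfio : f i ∈ openers n f := by simp [openers, hf.1.apply_apply hi, hfi, hfi.trans hi]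
      have := hO.opener_closer hfio
      rwa [hcloser (f i) (hfi.trans hi) (by rwa [hf.1.apply_apply hi]), hf.1.apply_apply hi,
        ← matchingOf_of_notMem hi hio] at this
  · rw [matchingOf, if_neg hi, hf.1.2.2.2 i hi]

lemma IsCD.eulerClass_eq : eulerClass n f = 2 * #((openers n f).filter Even) - n - 1 := by
  have hsplit := card_filter_add_card_filter_not (s := openers n f) Even
  rw [hf.isBallotSet_openers.card_eq] at hsplit
  rw [eulerClass, ← sum_filter, ← openers, sum_ite, sum_const, sum_const]
  simp only [nsmul_eq_mul, mul_one, mul_neg]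
  zify at hsplit
  linarith

end ChordDiagram

theorem ncard_setOf_isCD_eq_card_ballotSets (n p : ℕ) :
    {f | IsCD n f ∧ #((openers n f).filter Even) = p}.ncard = #(ballotSets (2 * n) 0 p) := by
  rw [← Set.ncard_coe_finset]
  refine Set.ncard_congr (fun f _ => openers n f) (fun f ⟨hf, hp⟩ => ?_)
    (fun f₁ f₂ ⟨hf₁, _⟩ ⟨hf₂, _⟩ h => ?_) fun O hO => ?_
  · rw [mem_coe, mem_ballotSets, hp]
    exact ⟨hf.isBallotSet_openers, rfl⟩
  · rw [← hf₁.matchingOf_openers, h, hf₂.matchingOf_openers]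
  · rw [mem_coe, mem_ballotSets] at hO
    have hopen := hO.1.openers_matchingOf
    refine ⟨matchingOf n O,
      ⟨⟨hO.1.isMatching_matchingOf, hO.1.noncrossing_matchingOf⟩, ?_⟩, hopen⟩
    rw [hopen]
    exact_mod_cast hO.2

/-- The number of chord diagrams of `n` chords with relative euler class
`e = 2k - (n-1)` is the shifted Narayana number `N(n,k+1) = (1/n)·C(n,k+1)·C(n,k)`. -/
theorem stmt12 (n k : ℕ) (hn : 1 ≤ n) (hk : k ≤ n - 1) :
    {f : ℕ → ℕ | IsCD n f ∧ eulerClass n f = 2*(k:ℤ) - ((n:ℤ) - 1)}.ncard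
      = n.choose (k+1) * n.choose k / n := by
  obtain ⟨m, rfl⟩ : ∃ m, n = m + 1 := ⟨n - 1, by omega⟩
  have hset :
      {f : ℕ → ℕ | IsCD (m + 1) f ∧
          eulerClass (m + 1) f = 2 * (k : ℤ) - ((m + 1 : ℕ) - 1)} =
        {f | IsCD (m + 1) f ∧ #((openers (m + 1) f).filter Even) = k + 1} := by
    ext f
    simp only [Set.mem_ofPred_eq, and_congr_right_iff]
    intro hf
    rw [hf.eulerClass_eq]
    omega
  have hcount : (m + 1) * #(ballotSets (2 * (m + 1)) 0 (k + 1)) =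
      (m + 1).choose (k + 1) * (m + 1).choose k := by
    have h := natCast_mul_binomDet m k (by omega)
    rw [← card_ballotSets_balanced] at h
    exact_mod_cast h
  rw [hset, ncard_setOf_isCD_eq_card_ballotSets, Nat.cast_add_one, ← hcount,
    Nat.mul_div_cancel_left _ m.succ_pos]
end
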